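/- arXiv:2206.12011 — 4 statements merged into one kernel-verified Lean document; each statement's English description precedes it below -/
import Mathlib

section
/- Let $X_1, \ldots, X_d$ be i.i.d. standard normal random variables and $\alpha = (\alpha_1, \ldots, \alpha_d) \in \mathbb{R}^d$ have nonnegative entries. Then for every $t > 0$, $\mathbb{P}\big(\sum_{i=1}^d \alpha_i (X_i^2 - 1) \leq -t\big) \leq \exp\big(-\frac{t^2}{4\|\alpha\|_2^2}\big)$. -/
/-!
Chernoff's method. For `u ≥ 0` and `X` standard normal,
`𝔼 exp (-u (X² - 1)) = eᵘ (1 + 2u)^(-1/2) ≤ exp u²`,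
because `log (1 + v) ≥ v - v²/2` for `v ≥ 0`.
By independence the moment generating function of `S = ∑ αᵢ (Xᵢ² - 1)` at `-λ` is at most
`exp (λ² ‖α‖²)`, and Markov's inequality with `λ = t / (2 ‖α‖²)` gives the bound.
-/

open MeasureTheory Real ProbabilityTheory

lemma integral_exp_neg_mul_sq_gaussianReal (a : ℝ) :
    ∫ y, exp (-(a * y ^ 2)) ∂gaussianReal 0 1 = (√(1 + 2 * a))⁻¹ := by
  have hpdf (y : ℝ) : gaussianPDFReal 0 1 y • exp (-(a * y ^ 2))
      = (√(2 * π))⁻¹ * exp (-(a + 1 / 2) * y ^ 2) := by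
    rw [gaussianPDFReal, smul_eq_mul, mul_assoc, ← exp_add]
    congr 2
    · norm_num
    · push_cast; ring
  have hquot : π / (a + 1 / 2) = 2 * π / (1 + 2 * a) := by
    rw [show a + 1 / 2 = (1 + 2 * a) / 2 by ring, div_div_eq_mul_div, mul_comm]
  simp_rw [integral_gaussianReal_eq_integral_smul one_ne_zero, hpdf]
  rw [integral_const_mul, integral_gaussian, hquot, sqrt_div (by positivity), div_eq_mul_inv,
    inv_mul_cancel_left₀ (by positivity)]

lemma sub_sq_div_two_le_log_one_add {v : ℝ} (hv : 0 ≤ v) : v - v ^ 2 / 2 ≤ log (1 + v) := by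
  refine le_trans ?_ (le_log_one_add_of_nonneg hv)
  rw [le_div_iff₀ (by linarith)]
  nlinarith [pow_nonneg hv 3]

lemma mgf_pi_sum {ι : Type*} [Fintype ι] {Ω : ι → Type*} [∀ i, MeasurableSpace (Ω i)]
    {μ : ∀ i, Measure (Ω i)} [∀ i, SigmaFinite (μ i)] (X : ∀ i, Ω i → ℝ) (t : ℝ) :
    mgf (fun ω => ∑ i, X i (ω i)) (Measure.pi μ) t = ∏ i, mgf (X i) (μ i) t := by
  simp_rw [mgf, Finset.mul_sum, exp_sum]
  exact integral_fintype_prod_eq_prod (fun i y => exp (t * X i y))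

lemma integrable_exp_mul_pi_sum {ι : Type*} [Fintype ι] {Ω : ι → Type*}
    [∀ i, MeasurableSpace (Ω i)] {μ : ∀ i, Measure (Ω i)} [∀ i, SigmaFinite (μ i)]
    {X : ∀ i, Ω i → ℝ} {t : ℝ}
    (hX : ∀ i, Integrable (fun ω => exp (t * X i ω)) (μ i)) :
    Integrable (fun ω => exp (t * ∑ i, X i (ω i))) (Measure.pi μ) := by
  simp_rw [Finset.mul_sum, exp_sum]
  exact Integrable.fintype_prod_dep hX

lemma integrable_exp_neg_mul_sq_sub_one_gaussianReal {u : ℝ} (hu : 0 ≤ u) :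
    Integrable (fun y => exp (-u * (y ^ 2 - 1))) (gaussianReal 0 1) := by
  refine .of_bound (by fun_prop) (exp u) (ae_of_all _ fun y => ?_)
  rw [norm_of_nonneg (exp_pos _).le, exp_le_exp]
  nlinarith [mul_nonneg hu (sq_nonneg y)]

lemma mgf_sq_sub_one_gaussianReal_neg_le {u : ℝ} (hu : 0 ≤ u) :
    mgf (fun y => y ^ 2 - 1) (gaussianReal 0 1) (-u) ≤ exp (u ^ 2) := by
  have hsqrt : exp (u - u ^ 2) ≤ √(1 + 2 * u) := by
    rw [le_sqrt (exp_pos _).le (by positivity), ← exp_nat_mul,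
      ← le_log_iff_exp_le (by positivity)]
    push_cast
    linarith [sub_sq_div_two_le_log_one_add (by positivity : 0 ≤ 2 * u)]
  have hexp (y : ℝ) : exp (-u * (y ^ 2 - 1)) = exp u * exp (-(u * y ^ 2)) := by
    rw [← exp_add]; ring_nf
  calc mgf (fun y => y ^ 2 - 1) (gaussianReal 0 1) (-u)
      = exp u * (√(1 + 2 * u))⁻¹ := by
        simp_rw [mgf, hexp, integral_const_mul, integral_exp_neg_mul_sq_gaussianReal]
    _ ≤ exp u * (exp (u - u ^ 2))⁻¹ := by gcongr
    _ = exp (u ^ 2) := by rw [← exp_neg, ← exp_add]; ring_nf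

lemma measureReal_le_neg_le_exp_of_mgf_neg_le {Ω : Type*} [MeasurableSpace Ω] {μ : Measure Ω}
    [IsFiniteMeasure μ] {X : Ω → ℝ} {c t : ℝ} (hc : 0 < c) (ht : 0 ≤ t)
    (h_int : ∀ l, 0 ≤ l → Integrable (fun ω => exp (-l * X ω)) μ)
    (h_mgf : ∀ l, 0 ≤ l → mgf X μ (-l) ≤ exp (c * l ^ 2)) :
    μ.real {ω | X ω ≤ -t} ≤ exp (-t ^ 2 / (4 * c)) := by
  set l := t / (2 * c)
  have hl : 0 ≤ l := by positivity
  calc μ.real {ω | X ω ≤ -t}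
      ≤ exp (-(-l) * -t) * mgf X μ (-l) :=
        measure_le_le_exp_mul_mgf (-t) (by linarith) (h_int l hl)
    _ ≤ exp (-(-l) * -t) * exp (c * l ^ 2) := by gcongr; exact h_mgf l hl
    _ = exp (-t ^ 2 / (4 * c)) := by
        rw [← exp_add]; congr 1; simp only [l]; field_simp; ring

/-- Laurent–Massart lower-tail bound for weighted sums of (centered) squares of
i.i.d. standard normals. -/
theorem stmt_4 (d : ℕ) (α : Fin d → ℝ) (hα : ∀ i, 0 ≤ α i) (t : ℝ) (ht : 0 < t) :
    (Measure.pi fun _ : Fin d => gaussianReal 0 1)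
        {x | ∑ i, α i * (x i ^ 2 - 1) ≤ -t}
      ≤ ENNReal.ofReal (Real.exp (-(t ^ 2) / (4 * ∑ i, α i ^ 2))) := by
  have hs : 0 ≤ ∑ i, α i ^ 2 := Finset.sum_nonneg fun i _ => sq_nonneg (α i)
  rcases hs.eq_or_lt with hs | hs
  · -- `α = 0`: the bound reads `exp (-t² / 0) = 1`.
    rw [← hs, mul_zero, div_zero, exp_zero, ENNReal.ofReal_one]
    exact prob_le_one
  rw [← ofReal_measureReal]
  apply ENNReal.ofReal_le_ofReal
  apply measureReal_le_neg_le_exp_of_mgf_neg_le hs ht.le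
  · intro l hl
    refine integrable_exp_mul_pi_sum (X := fun i y => α i * (y ^ 2 - 1)) fun i => ?_
    simpa only [← mul_assoc, neg_mul] using
      integrable_exp_neg_mul_sq_sub_one_gaussianReal (mul_nonneg hl (hα i))
  · intro l hl
    calc mgf (fun x => ∑ i, α i * (x i ^ 2 - 1)) (Measure.pi fun _ => gaussianReal 0 1) (-l)
        = ∏ i, mgf (fun y => y ^ 2 - 1) (gaussianReal 0 1) (-(α i * l)) := by
          simp_rw [mgf_pi_sum (fun i y => α i * (y ^ 2 - 1)), mgf_const_mul, mul_neg]
      _ ≤ ∏ i, exp ((α i * l) ^ 2) := Finset.prod_le_prod (fun i _ => mgf_nonneg)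
          fun i _ => mgf_sq_sub_one_gaussianReal_neg_le (mul_nonneg (hα i) hl)
      _ = exp ((∑ i, α i ^ 2) * l ^ 2) := by
          rw [← exp_sum, Finset.sum_mul]; simp_rw [mul_pow]
end

section
/- For $\rho \in (-1, 1)$ and a positive integer $m$, the $m \times m$ circulant matrix $M$ with first row $\frac{1}{1-\rho^4}(1 + \rho^4, -\rho^2, 0, \ldots, 0, -\rho^2)$ (i.e., $M = I_m - R$ where $R$ is the circulant matrix $\frac{\rho^2}{1-\rho^4}(-2\rho^2, 1, 0, \ldots, 0, 1)$) has determinant $\det(M) = (1-\rho^4)^{-m}(1 - \rho^{2m})^2$. -/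
/-!
With `P` the cyclic shift matrix, the matrix is `(1 - ρ⁴)⁻¹ (1 - ρ² P)(1 - ρ² P)ᵀ`,
because `P Pᵀ = 1`. Expanding `det (1 - t P)` along its first column leaves two triangular minors,
with diagonals `1, …, 1` and `-t, …, -t`, so `det (1 - t P) = 1 - tᵐ`.
-/

open Matrix

namespace Matrix

variable {R : Type*} [CommRing R]

lemma permMatrix_finRotate_apply {m : ℕ} [NeZero m] (j k : Fin m) :
    (finRotate m).permMatrix R j k = if j + 1 = k then 1 else 0 := by
  simp [PEquiv.toMatrix_apply]

lemma det_one_sub_smul_permMatrix_finRotate_succ_succ (n : ℕ) (t : R) :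
    det (1 - t • (finRotate (n + 2)).permMatrix R) = 1 - t ^ (n + 2) := by
  set A := 1 - t • (finRotate (n + 2)).permMatrix R
  have hA (j k) : A j k = (if j = k then 1 else 0) - if j + 1 = k then t else 0 := by
    simp [A, one_apply]
  have upper : (A.submatrix Fin.succ Fin.succ).IsUpperTriangular := by
    intro a b hba
    rw [id, id, Fin.lt_def] at hba
    simp only [submatrix_apply, hA, Fin.ext_iff, Fin.val_add_one, Fin.val_succ, Fin.val_last]
    split_ifs <;> first | omega | simp_all
  have lower : (A.submatrix (Fin.last (n + 1)).succAbove Fin.succ).IsLowerTriangular := by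
    intro a b hab
    rw [OrderDual.toDual_lt_toDual, Fin.lt_def] at hab
    simp only [submatrix_apply, hA, Fin.ext_iff, Fin.val_add_one, Fin.val_succ, Fin.val_last,
      Fin.succAbove_last, Fin.val_castSucc]
    split_ifs <;> first | omega | simp_all
  have column_zero (i : Fin (n + 2)) (h0 : i ≠ 0) (hlast : i ≠ Fin.last (n + 1)) :
      A i 0 = 0 := by
    rw [ne_eq, Fin.ext_iff] at h0 hlast
    rw [hA]
    simp only [Fin.ext_iff, Fin.val_add_one, Fin.val_last, Fin.val_zero]
    split_ifs <;> first | omega | simp_all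
  rw [det_succ_column_zero, Fintype.sum_eq_add 0 (Fin.last (n + 1)) (by simp [Fin.ext_iff]),
    Fin.succAbove_zero, det_of_isUpperTriangular upper, det_of_isLowerTriangular _ lower]
  · simp [hA, Fin.ext_iff, mul_right_comm _ t, ← mul_pow, pow_succ t (n + 1),
      sub_eq_add_neg]
  · rintro i ⟨h0, hlast⟩
    rw [column_zero i h0 hlast, mul_zero, zero_mul]

lemma det_one_sub_smul_permMatrix_finRotate {m : ℕ} [NeZero m] (t : R) :
    det (1 - t • (finRotate m).permMatrix R) = 1 - t ^ m := by
  match m, ‹NeZero m› with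
  | 0, h => exact absurd rfl h.ne
  | 1, _ => simp [det_unique]
  | n + 2, _ => exact det_one_sub_smul_permMatrix_finRotate_succ_succ n t

lemma permMatrix_mul_transpose {n : Type*} [Fintype n] [DecidableEq n] (σ : Equiv.Perm n) :
    σ.permMatrix R * (σ.permMatrix R)ᵀ = 1 := by
  rw [transpose_permMatrix, ← permMatrix_mul, inv_mul_cancel, permMatrix_one]

lemma one_sub_smul_mul_transpose {n : Type*} [Fintype n] [DecidableEq n] {P : Matrix n n R}
    (hP : P * Pᵀ = 1) (t : R) :
    (1 - t • P) * (1 - t • P)ᵀ = (1 + t ^ 2) • 1 - t • (P + Pᵀ) := by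
  simp only [transpose_sub, transpose_one, transpose_smul, sub_mul, mul_sub, one_mul, mul_one,
    smul_mul_smul_comm, hP]
  module

end Matrix

theorem stmt_9_general (m : ℕ) (hm : 0 < m) (ρ : ℝ) :
    Matrix.det (Matrix.of fun j k : Fin m =>
        ((if j = k then 1 + ρ ^ 4 else 0)
          + (if (k : ℕ) = ((j : ℕ) + 1) % m then -ρ ^ 2 else 0)
          + (if (j : ℕ) = ((k : ℕ) + 1) % m then -ρ ^ 2 else 0)) / (1 - ρ ^ 4))
      = (1 - ρ ^ 4) ^ (-(m : ℤ)) * (1 - ρ ^ (2 * m)) ^ 2 := by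
  have : NeZero m := ⟨hm.ne'⟩
  set P := (finRotate m).permMatrix ℝ
  have val_eq_iff (a b : Fin m) : (a : ℕ) = ((b : ℕ) + 1) % m ↔ b + 1 = a := by
    rw [eq_comm, Fin.ext_iff, Fin.val_add, Fin.val_one', Nat.add_mod_mod]
  calc _ = det ((1 - ρ ^ 4)⁻¹ • ((1 + (ρ ^ 2) ^ 2) • 1 - ρ ^ 2 • (P + Pᵀ))) := by
        congr 1
        ext j k
        simp only [of_apply, val_eq_iff, Matrix.smul_apply, Matrix.sub_apply, Matrix.add_apply,
          one_apply, transpose_apply, P, permMatrix_finRotate_apply, smul_eq_mul]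
        split_ifs <;> ring
    _ = det ((1 - ρ ^ 4)⁻¹ • ((1 - ρ ^ 2 • P) * (1 - ρ ^ 2 • P)ᵀ)) := by
        rw [one_sub_smul_mul_transpose (permMatrix_mul_transpose _)]
    _ = (1 - ρ ^ 4) ^ (-(m : ℤ)) * (1 - ρ ^ (2 * m)) ^ 2 := by
        rw [det_smul, det_mul, det_transpose, det_one_sub_smul_permMatrix_finRotate,
          Fintype.card_fin, _root_.zpow_neg, zpow_natCast, inv_pow, ← pow_mul]
        ring

/-- Determinant of the circulant matrix `I - R` where `R` is the circulant matrix
with first row `(ρ²/(1-ρ⁴))·(-2ρ², 1, 0, …, 0, 1)`: the matrix `M = I - R` has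
entries `(1+ρ⁴)/(1-ρ⁴)` on the diagonal and `-ρ²/(1-ρ⁴)` on the two circulant
off-diagonals, and `det M = (1-ρ⁴)^(-m) (1-ρ^{2m})²`. -/
theorem stmt_9 (m : ℕ) (hm : 0 < m) (ρ : ℝ) (hρ : ρ ∈ Set.Ioo (-1 : ℝ) 1) :
    Matrix.det (Matrix.of fun j k : Fin m =>
        ((if j = k then 1 + ρ ^ 4 else 0)
          + (if (k : ℕ) = ((j : ℕ) + 1) % m then -ρ ^ 2 else 0)
          + (if (j : ℕ) = ((k : ℕ) + 1) % m then -ρ ^ 2 else 0)) / (1 - ρ ^ 4))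
      = (1 - ρ ^ 4) ^ (-(m : ℤ)) * (1 - ρ ^ (2 * m)) ^ 2 :=
  stmt_9_general m hm ρ
end

section
/- For all $x \in [0, 1]$, the two inequalities $x^2(\sqrt{1+x} - 1) \leq \sqrt{1+x^3} - 1$ and $\sqrt{1+x^3} - 1 \leq x(\sqrt{1+x} - 1)$ hold. -/
/-- For `x ∈ [0,1]`: `x²(√(1+x) - 1) ≤ √(1+x³) - 1 ≤ x(√(1+x) - 1)`. -/
theorem stmt_16 (x : ℝ) (hx : x ∈ Set.Icc (0 : ℝ) 1) :
    x ^ 2 * (Real.sqrt (1 + x) - 1) ≤ Real.sqrt (1 + x ^ 3) - 1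
    ∧ Real.sqrt (1 + x ^ 3) - 1 ≤ x * (Real.sqrt (1 + x) - 1) := by
  obtain ⟨hx0, hx1⟩ := hx
  set a := Real.sqrt (1 + x) with ha
  set b := Real.sqrt (1 + x ^ 3) with hb
  have hxp : (0:ℝ) ≤ 1 + x := by linarith
  have hxp3 : (0:ℝ) ≤ 1 + x ^ 3 := by positivity
  have ha2 : a ^ 2 = 1 + x := Real.sq_sqrt hxp
  have hb2 : b ^ 2 = 1 + x ^ 3 := Real.sq_sqrt hxp3
  have han : 0 ≤ a := Real.sqrt_nonneg _
  have hbn : 0 ≤ b := Real.sqrt_nonneg _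
  have ha1 : 1 ≤ a := by nlinarith [sq_nonneg (a - 1)]
  have hb1 : 1 ≤ b := by nlinarith [sq_nonneg (b - 1), pow_nonneg hx0 3]
  have hx3 : x ^ 3 ≤ x := by
    nlinarith [mul_nonneg (mul_nonneg hx0 (sub_nonneg.2 hx1)) hxp]
  have hba : b ≤ a := Real.sqrt_le_sqrt (by linarith)
  have hxab : x * a ≤ b := by
    have h1 : (0:ℝ) ≤ x * a := mul_nonneg hx0 han
    have h2 : (x*a)^2 ≤ b^2 := by
      have : x^2 * (1+x) ≤ 1 + x^3 := by nlinarith [sq_nonneg x]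
      calc (x*a)^2 = x^2 * (1+x) := by rw [mul_pow, ha2]
        _ ≤ 1 + x^3 := this
        _ = b^2 := hb2.symm
    nlinarith [h2, h1]
  constructor
  · nlinarith [mul_nonneg (mul_nonneg hx0 hx0) (sub_nonneg.2 ha1),
      mul_nonneg hx0 (sub_nonneg.2 hba), sq_nonneg x, sq_nonneg (a-b),
      mul_nonneg (mul_nonneg hx0 hx0) (mul_nonneg hx0 (sub_nonneg.2 hba))]
  · nlinarith [mul_nonneg (mul_nonneg hx0 hx0) (sub_nonneg.2 hxab),
      mul_nonneg (mul_nonneg hx0 hx0) (sub_nonneg.2 hx1),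
      mul_nonneg hx0 (sub_nonneg.2 hxab)]
end

section
/- For all $x \in (0, 1]$, $\ln\frac{\sqrt{1-x+x^2} + 1 - x}{\sqrt{1+x} + 1} + \frac{1}{1-x}(x - \sqrt{1-x+x^2}) + \sqrt{1+x} \leq (\sqrt{2}-1)^2 x$. -/
lemma pade_log (u : ℝ) (h1 : 1/3 ≤ u) (h2 : u ≤ 1) :
    Real.log u ≤ -2 * ((1-u)/(1+u)) := by
  have hu0 : 0 < u := by linarith
  set r : ℝ := (1-u)/(1+u) with hr
  have hu1 : (0:ℝ) < 1 + u := by linarith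
  have hr0 : 0 ≤ r := div_nonneg (by linarith) (by linarith)
  have hrh : r ≤ 1/2 := by
    rw [hr, div_le_iff₀ hu1]; linarith
  have hr1 : 1 - r > 0 := by linarith
  have hb := Real.exp_bound (x := 2*r) (by rw [abs_of_nonneg (by linarith : (0:ℝ) ≤ 2*r)]; linarith) (n := 4) (by norm_num)
  have hsum : ∑ m ∈ Finset.range 4, (2*r) ^ m / (m.factorial : ℝ)
      = 1 + 2*r + 2*r^2 + (4/3)*r^3 := by
    simp [Finset.sum_range_succ, Nat.factorial]
    ring
  have habs : |2*r| = 2*r := abs_of_nonneg (by linarith)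
  rw [hsum, habs] at hb
  have hb2 := (abs_le.mp hb).2
  have h4 : (2*r)^4 * (((4:ℕ).succ : ℝ) / (((4:ℕ).factorial : ℝ) * ((4:ℕ):ℝ))) = (5/6)*r^4 := by
    norm_num [Nat.factorial]; ring
  rw [h4] at hb2
  have hexp : Real.exp (2*r) ≤ 1 + 2*r + 2*r^2 + (4/3)*r^3 + (5/6)*r^4 := by linarith
  have hinv : Real.exp (2*r) ≤ 1/u := by
    have he : (1+r)/(1-r) = 1/u := by
      rw [div_eq_div_iff hr1.ne' hu0.ne']
      rw [hr]
      field_simp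
      ring
    rw [← he, le_div_iff₀ hr1]
    nlinarith [hexp, pow_nonneg hr0 3, pow_nonneg hr0 4, pow_nonneg hr0 5]
  have hlog : 2*r ≤ Real.log (1/u) := by
    rw [Real.le_log_iff_exp_le (by positivity)]
    exact hinv
  rw [one_div, Real.log_inv] at hlog
  linarith
set_option maxHeartbeats 1000000

/-- For `x ∈ (0,1)`,
`ln((√(1-x+x²) + 1 - x)/(√(1+x) + 1)) + (x - √(1-x+x²))/(1-x) + √(1+x) ≤ (√2-1)² x`. -/
theorem stmt_17 (x : ℝ) (hx : x ∈ Set.Ioo (0 : ℝ) 1) :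
    Real.log ((Real.sqrt (1 - x + x ^ 2) + 1 - x) / (Real.sqrt (1 + x) + 1))
      + (1 / (1 - x)) * (x - Real.sqrt (1 - x + x ^ 2)) + Real.sqrt (1 + x)
      ≤ (Real.sqrt 2 - 1) ^ 2 * x := by
  obtain ⟨hx0, hx1⟩ := hx
  set s := Real.sqrt (1 - x + x ^ 2) with hs
  set t := Real.sqrt (1 + x) with ht
  set c := Real.sqrt 2 with hc
  have hq1 : (0:ℝ) < 1 - x + x^2 := by nlinarith
  have hs2 : s^2 = 1 - x + x^2 := Real.sq_sqrt hq1.le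
  have ht2 : t^2 = 1 + x := Real.sq_sqrt (by linarith)
  have hc2 : c^2 = 2 := Real.sq_sqrt (by norm_num)
  have hs0 : 0 < s := Real.sqrt_pos.mpr hq1
  have ht0 : 0 < t := Real.sqrt_pos.mpr (by linarith)
  have hc0 : 0 < c := Real.sqrt_pos.mpr (by norm_num)
  have hsx2 : x^2 ≤ s := by
    rw [hs]
    have hx2 : x^2 ≤ 1 := by nlinarith
    exact (Real.le_sqrt (sq_nonneg x) hq1.le).mpr
      (by nlinarith [mul_le_mul_of_nonneg_left hx2 (sq_nonneg x)])
  clear_value s t c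
  have hs1 : s ≤ 1 := by nlinarith [hs2, hs0]
  have hslb : (0.85 : ℝ) ≤ s := by nlinarith [hs2, hs0, sq_nonneg (x - 1/2), sq_nonneg (s - 0.85)]
  have ht1 : 1 ≤ t := by nlinarith [ht2, ht0]
  have htub : t ≤ 1.45 := by nlinarith [ht2, ht0]
  have hc1 : 1 < c := by nlinarith [hc2, hc0]
  have hcub : c < 1.5 := by nlinarith [hc2, hc0]
  have hx1' : (0:ℝ) < 1 - x := by linarith
  have e1 : (t+x-s)*(s+t+x) = 2*x*(1+t) := by linear_combination ht2 - hs2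
  have hts : s < t + x := by
    by_contra hcon
    push_neg at hcon
    nlinarith [e1, mul_pos hx0 ht0]
  -- Part B
  have h2s : 2*s ≤ 2 + x^2 - x := by
    nlinarith [hs2, hs0, sq_nonneg (x*(1-x)), sq_nonneg (2*s - (2 + x^2 - x))]
  have hB1 : t*(1-x) ≤ s - x^2 := by
    have hsq : (t*(1-x))^2 ≤ (s - x^2)^2 := by
      nlinarith [hs2, ht2, mul_le_mul_of_nonneg_left h2s (sq_nonneg x)]
    have h1 := Real.sqrt_le_sqrt hsq
    rwa [Real.sqrt_sq (mul_nonneg ht0.le (by linarith)), Real.sqrt_sq (by linarith)] at h1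
  have hB : (1 / (1 - x)) * (x - s) + t ≤ x := by
    have hdiv : (1 / (1 - x)) * (x - s) = (x - s) / (1 - x) := by ring
    rw [hdiv]
    have hq : (x - s) / (1 - x) ≤ x - t := by
      rw [div_le_iff₀ hx1']
      nlinarith [hB1]
    linarith
  -- Part A
  have hN0 : (0:ℝ) < s + 1 - x := by linarith
  have hD0 : (0:ℝ) < t + 1 := by linarith
  have hct : x + 1 - c ≤ (c-1)*t := by
    rcases le_or_gt (x+1) c with h | h
    · have h0 : 0 ≤ (c-1)*t := mul_nonneg (by linarith) ht0.le
      linarith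
    · have h5 : 0 < (c-1)*t + (x+1-c) := by
        have h6 := mul_pos (show (0:ℝ) < c-1 by linarith) ht0
        linarith
      have e : ((c-1)*t - (x+1-c)) * ((c-1)*t + (x+1-c)) = x*(1-x) := by
        linear_combination (c-1)^2 * ht2 + x * hc2
      by_contra hcon
      push_neg at hcon
      have h6 : ((c-1)*t - (x+1-c)) * ((c-1)*t + (x+1-c)) < 0 :=
        mul_neg_of_neg_of_pos (by linarith) h5
      nlinarith [e, mul_pos hx0 (show (0:ℝ) < 1-x by linarith)]
  have hstep : x + s + s*t ≤ c*(1+t) := by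
    nlinarith [mul_le_mul_of_nonneg_right hs1 ht0.le, hct]
  have hkey : (c-1)*x*(s+t+2-x) ≤ t + x - s := by
    have e2 : (s+t+2-x)*(s+t+x) = 2*(1+s*t+s+t+x) := by linear_combination hs2 + ht2
    have hq0 : (0:ℝ) < s + t + x := by linarith
    have h3 : (c-1)*(1+s*t+s+t+x) ≤ 1 + t := by
      nlinarith [mul_le_mul_of_nonneg_left hstep (show (0:ℝ) ≤ c-1 by linarith), hc2, ht0]
    have h4 : ((c-1)*x*(s+t+2-x)) * (s+t+x) ≤ (t+x-s) * (s+t+x) := by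
      rw [e1]
      calc ((c-1)*x*(s+t+2-x)) * (s+t+x) = (c-1)*x*((s+t+2-x)*(s+t+x)) := by ring
        _ = 2*x*((c-1)*(1+s*t+s+t+x)) := by rw [e2]; ring
        _ ≤ 2*x*(1+t) := by nlinarith [h3, hx0]
    exact le_of_mul_le_mul_right h4 hq0
  have hu13 : 1/3 ≤ (s + 1 - x)/(t + 1) := by
    rw [le_div_iff₀ hD0]
    linarith [hslb, htub]
  have hu1 : (s + 1 - x)/(t + 1) ≤ 1 := by
    rw [div_le_one hD0]
    linarith [hts]
  have hA : Real.log ((s + 1 - x)/(t + 1)) ≤ -2*(c-1)*x := by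
    have hp := pade_log _ hu13 hu1
    have hden : (0:ℝ) < 1 + (s+1-x)/(t+1) := by
      have := div_pos hN0 hD0
      linarith
    have hfrac : (c-1)*x ≤ (1 - (s+1-x)/(t+1))/(1 + (s+1-x)/(t+1)) := by
      have e3 : (1 - (s+1-x)/(t+1))/(1 + (s+1-x)/(t+1)) = (t+x-s)/(s+t+2-x) := by
        rw [div_eq_div_iff hden.ne' (by linarith : (s+t+2-x) ≠ 0)]
        field_simp
        ring
      rw [e3, le_div_iff₀ (by linarith : (0:ℝ) < s+t+2-x)]
      exact hkey
    calc Real.log ((s + 1 - x)/(t + 1)) ≤ -2 * ((1 - (s+1-x)/(t+1))/(1 + (s+1-x)/(t+1))) := hp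
      _ ≤ -2*(c-1)*x := by linarith [hfrac]
  have hfin : (c-1)^2*x = x - 2*(c-1)*x := by linear_combination x * hc2
  linarith [hA, hB, hfin]
end
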